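/- arXiv:1809.07390 — 2 statements merged into one kernel-verified Lean document; each statement's English description precedes it below -/
import Mathlib

section
/- Let r₁, r₂, r₃, r₄ be even positive integers, and let f₁, f₂ be bent functions on 𝔽₂^{r₁}, g₁, g₂ bent functions on 𝔽₂^{r₂}, l₁, l₂ bent functions на 𝔽₂^{r₃}, and d₁, d₂ bent functions on 𝔽₂^{r₄}. Then 𝔣 : 𝔽₂^{r₁} × 𝔽₂^{r₂} × 𝔽₂^{r₃} × 𝔽₂^{r₄} → 𝔽₂ defined by 𝔣(x,y,z,w) = f₂(x) ⊕ g₂(y) ⊕ l₂(z) ⊕ d₂(w) ⊕ (g₁(y) ⊕ g₂(y))(f₁(x) ⊕ f₂(x) ⊕ d₁(w) ⊕ d₂(w)) ⊕ (l₁(z) ⊕ l₂(z))(f₁(x) ⊕ f₂(x)) is a bent function on 𝔽₂^{r₁+r₂+r₃+r₄}, and its dual 𝔣* is given by the same formula with f₁, f₂, g₁, g₂, l₁, l₂, d₁, d₂ replaced by their duals f₁*, f₂*, g₁*, g₂*, l₁*, l₂*, d₁*, d₂*. -/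
open Finset

def dotp {ι : Type*} [Fintype ι] (a b : ι → ZMod 2) : ZMod 2 := ∑ i, a i * b i

def WHT {ι : Type*} [Fintype ι] [DecidableEq ι]
    (f : (ι → ZMod 2) → ZMod 2) (ω : ι → ZMod 2) : ℤ :=
  ∑ x : ι → ZMod 2, (-1 : ℤ) ^ ((f x + dotp ω x).val)

def IsBent {ι : Type*} [Fintype ι] [DecidableEq ι] (f : (ι → ZMod 2) → ZMod 2) : Prop :=
  ∀ ω, |WHT f ω| = 2 ^ (Fintype.card ι / 2)

def IsDualBent {ι : Type*} [Fintype ι] [DecidableEq ι] (f g : (ι → ZMod 2) → ZMod 2) : Prop :=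
  ∀ ω, WHT f ω = 2 ^ (Fintype.card ι / 2) * (-1 : ℤ) ^ ((g ω).val)

def IsPlateaued {ι : Type*} [Fintype ι] [DecidableEq ι] (s : ℕ) (f : (ι → ZMod 2) → ZMod 2) : Prop :=
  ∀ ω, WHT f ω = 0 ∨ WHT f ω = 2 ^ ((Fintype.card ι + s) / 2) ∨
    WHT f ω = -(2 ^ ((Fintype.card ι + s) / 2))

def WSupport {ι : Type*} [Fintype ι] [DecidableEq ι] (f : (ι → ZMod 2) → ZMod 2) : Set (ι → ZMod 2) :=
  {ω | WHT f ω ≠ 0}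

noncomputable def chi (a : ZMod 2) : ℤ := (-1 : ℤ) ^ a.val

lemma chi_add (a b : ZMod 2) : chi (a + b) = chi a * chi b := by revert a b; decide

lemma chi_vals (a : ZMod 2) : chi a = 1 ∨ chi a = -1 := by revert a; decide

lemma sum_arrow_sum {ι₁ ι₂ : Type*} [Fintype ι₁] [Fintype ι₂] [DecidableEq ι₁] [DecidableEq ι₂]
    (h : ((ι₁ ⊕ ι₂) → ZMod 2) → ℤ) :
    ∑ x : (ι₁ ⊕ ι₂) → ZMod 2, h x
      = ∑ a : ι₁ → ZMod 2, ∑ b : ι₂ → ZMod 2, h (Sum.elim a b) := by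
  rw [← Equiv.sum_comp (Equiv.sumArrowEquivProdArrow ι₁ ι₂ (ZMod 2)).symm h,
    Fintype.sum_prod_type]
  rfl

lemma dotp_elim {ι₁ ι₂ : Type*} [Fintype ι₁] [Fintype ι₂] (p a : ι₁ → ZMod 2) (q b : ι₂ → ZMod 2) :
    dotp (Sum.elim p q) (Sum.elim a b) = dotp p a + dotp q b := by
  simp [dotp, Fintype.sum_sum_type]

lemma key' {ι : Type*} [Fintype ι] [DecidableEq ι]
    {f₁ f₂ f₁s f₂s : (ι → ZMod 2) → ZMod 2}
    (hf₁ : IsDualBent f₁ f₁s) (hf₂ : IsDualBent f₂ f₂s) (ε C : ZMod 2) (α : ι → ZMod 2) :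
    ∑ x : ι → ZMod 2, chi (f₂ x + ε * (f₁ x + f₂ x) + dotp α x + C)
      = 2 ^ (Fintype.card ι / 2) * chi (f₂s α + ε * (f₁s α + f₂s α) + C) := by
  have base : ∑ x : ι → ZMod 2, chi (f₂ x + ε * (f₁ x + f₂ x) + dotp α x)
      = 2 ^ (Fintype.card ι / 2) * chi (f₂s α + ε * (f₁s α + f₂s α)) := by
    have hε : ε = 0 ∨ ε = 1 := by revert ε; decide
    rcases hε with rfl | rfl
    · simpa [chi, WHT] using hf₂ α
    · have h2 : ∀ a b : ZMod 2, b + 1 * (a + b) = a := by decide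
      simp only [h2]
      simpa [chi, WHT] using hf₁ α
  calc ∑ x : ι → ZMod 2, chi (f₂ x + ε * (f₁ x + f₂ x) + dotp α x + C)
      = ∑ x : ι → ZMod 2, chi (f₂ x + ε * (f₁ x + f₂ x) + dotp α x) * chi C :=
        Finset.sum_congr rfl (fun x _ => chi_add _ _)
    _ = (∑ x : ι → ZMod 2, chi (f₂ x + ε * (f₁ x + f₂ x) + dotp α x)) * chi C :=
        (Finset.sum_mul _ _ _).symm
    _ = 2 ^ (Fintype.card ι / 2) * chi (f₂s α + ε * (f₁s α + f₂s α)) * chi C := by rw [base]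
    _ = 2 ^ (Fintype.card ι / 2) * chi (f₂s α + ε * (f₁s α + f₂s α) + C) := by
        rw [chi_add (f₂s α + ε * (f₁s α + f₂s α)) C]; ring

/-- Generalized indirect sum A: for bent `f₁,f₂` on `𝔽₂^{r₁}`,
`g₁,g₂` on `𝔽₂^{r₂}`, `l₁,l₂` on `𝔽₂^{r₃}`, `d₁,d₂` on `𝔽₂^{r₄}`, the function
`𝔣(x,y,z,w) = f₂(x) ⊕ g₂(y) ⊕ l₂(z) ⊕ d₂(w) ⊕ (g₁⊕g₂)(y)(f₁(x)⊕f₂(x)⊕d₁(w)⊕d₂(w))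
⊕ (l₁⊕l₂)(z)(f₁⊕f₂)(x)` is bent, and its dual is given by the same formula with
all initial functions replaced by their duals. -/
theorem stmt10 {r₁ r₂ r₃ r₄ : ℕ}
    (h1 : 0 < r₁) (h2 : 0 < r₂) (h3 : 0 < r₃) (h4 : 0 < r₄)
    (he1 : Even r₁) (he2 : Even r₂) (he3 : Even r₃) (he4 : Even r₄)
    (f₁ f₂ f₁s f₂s : (Fin r₁ → ZMod 2) → ZMod 2)
    (g₁ g₂ g₁s g₂s : (Fin r₂ → ZMod 2) → ZMod 2)
    (l₁ l₂ l₁s l₂s : (Fin r₃ → ZMod 2) → ZMod 2)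
    (d₁ d₂ d₁s d₂s : (Fin r₄ → ZMod 2) → ZMod 2)
    (hf₁ : IsDualBent f₁ f₁s) (hf₂ : IsDualBent f₂ f₂s)
    (hg₁ : IsDualBent g₁ g₁s) (hg₂ : IsDualBent g₂ g₂s)
    (hl₁ : IsDualBent l₁ l₁s) (hl₂ : IsDualBent l₂ l₂s)
    (hd₁ : IsDualBent d₁ d₁s) (hd₂ : IsDualBent d₂ d₂s)
    (F Fs : ((Fin r₁ ⊕ (Fin r₂ ⊕ (Fin r₃ ⊕ Fin r₄))) → ZMod 2) → ZMod 2)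
    (hF : ∀ x, F x =
      f₂ (fun i => x (Sum.inl i)) + g₂ (fun i => x (Sum.inr (Sum.inl i))) +
      l₂ (fun i => x (Sum.inr (Sum.inr (Sum.inl i)))) +
      d₂ (fun i => x (Sum.inr (Sum.inr (Sum.inr i)))) +
      (g₁ (fun i => x (Sum.inr (Sum.inl i))) + g₂ (fun i => x (Sum.inr (Sum.inl i)))) *
        (f₁ (fun i => x (Sum.inl i)) + f₂ (fun i => x (Sum.inl i)) +
         d₁ (fun i => x (Sum.inr (Sum.inr (Sum.inr i)))) +
         d₂ (fun i => x (Sum.inr (Sum.inr (Sum.inr i))))) +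
      (l₁ (fun i => x (Sum.inr (Sum.inr (Sum.inl i)))) +
       l₂ (fun i => x (Sum.inr (Sum.inr (Sum.inl i))))) *
        (f₁ (fun i => x (Sum.inl i)) + f₂ (fun i => x (Sum.inl i))))
    (hFs : ∀ x, Fs x =
      f₂s (fun i => x (Sum.inl i)) + g₂s (fun i => x (Sum.inr (Sum.inl i))) +
      l₂s (fun i => x (Sum.inr (Sum.inr (Sum.inl i)))) +
      d₂s (fun i => x (Sum.inr (Sum.inr (Sum.inr i)))) +
      (g₁s (fun i => x (Sum.inr (Sum.inl i))) + g₂s (fun i => x (Sum.inr (Sum.inl i)))) *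
        (f₁s (fun i => x (Sum.inl i)) + f₂s (fun i => x (Sum.inl i)) +
         d₁s (fun i => x (Sum.inr (Sum.inr (Sum.inr i)))) +
         d₂s (fun i => x (Sum.inr (Sum.inr (Sum.inr i))))) +
      (l₁s (fun i => x (Sum.inr (Sum.inr (Sum.inl i)))) +
       l₂s (fun i => x (Sum.inr (Sum.inr (Sum.inl i))))) *
        (f₁s (fun i => x (Sum.inl i)) + f₂s (fun i => x (Sum.inl i)))) :
    IsBent F ∧ IsDualBent F Fs := by
  have hcard : Fintype.card (Fin r₁ ⊕ (Fin r₂ ⊕ (Fin r₃ ⊕ Fin r₄))) / 2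
      = r₁ / 2 + (r₂ / 2 + (r₃ / 2 + r₄ / 2)) := by
    obtain ⟨a, ha⟩ := he1; obtain ⟨b, hb⟩ := he2
    obtain ⟨c, hc⟩ := he3; obtain ⟨d, hd⟩ := he4
    simp only [Fintype.card_sum, Fintype.card_fin]
    omega
  have main : IsDualBent F Fs := by
    intro ω
    obtain ⟨α, β, γ, δ, rfl⟩ : ∃ α β γ δ, ω = Sum.elim α (Sum.elim β (Sum.elim γ δ)) :=
      ⟨_, _, _, _, by funext i; rcases i with i | i | i | i <;> rfl⟩
    have h0 : WHT F (Sum.elim α (Sum.elim β (Sum.elim γ δ)))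
        = ∑ y : Fin r₂ → ZMod 2, ∑ z : Fin r₃ → ZMod 2, ∑ w : Fin r₄ → ZMod 2,
            ∑ x : Fin r₁ → ZMod 2,
            chi (f₂ x + ((g₁ y + g₂ y) + (l₁ z + l₂ z)) * (f₁ x + f₂ x) + dotp α x +
              (g₂ y + l₂ z + d₂ w + (g₁ y + g₂ y) * (d₁ w + d₂ w) +
               dotp β y + dotp γ z + dotp δ w)) := by
      rw [show WHT F (Sum.elim α (Sum.elim β (Sum.elim γ δ)))
            = ∑ x : (Fin r₁ ⊕ (Fin r₂ ⊕ (Fin r₃ ⊕ Fin r₄))) → ZMod 2,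
                chi (F x + dotp (Sum.elim α (Sum.elim β (Sum.elim γ δ))) x) from rfl]
      rw [sum_arrow_sum, Finset.sum_comm]
      simp only [sum_arrow_sum]
      refine Finset.sum_congr rfl fun y _ => Finset.sum_congr rfl fun z _ =>
        Finset.sum_congr rfl fun w _ => Finset.sum_congr rfl fun x _ => ?_
      rw [hF]
      simp only [Sum.elim_inl, Sum.elim_inr, dotp_elim]
      exact congrArg chi (by ring)
    rw [h0]
    have step1 : ∀ (y : Fin r₂ → ZMod 2) (z : Fin r₃ → ZMod 2) (w : Fin r₄ → ZMod 2),
        (∑ x : Fin r₁ → ZMod 2,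
          chi (f₂ x + ((g₁ y + g₂ y) + (l₁ z + l₂ z)) * (f₁ x + f₂ x) + dotp α x +
            (g₂ y + l₂ z + d₂ w + (g₁ y + g₂ y) * (d₁ w + d₂ w) +
             dotp β y + dotp γ z + dotp δ w)))
        = 2 ^ (r₁ / 2) *
            chi (f₂s α + ((g₁ y + g₂ y) + (l₁ z + l₂ z)) * (f₁s α + f₂s α) +
              (g₂ y + l₂ z + d₂ w + (g₁ y + g₂ y) * (d₁ w + d₂ w) +
               dotp β y + dotp γ z + dotp δ w)) := by
      intro y z w
      simpa using key' hf₁ hf₂ _ _ α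
    simp only [step1]
    have step2 : ∀ (y : Fin r₂ → ZMod 2) (z : Fin r₃ → ZMod 2),
        (∑ w : Fin r₄ → ZMod 2, (2 : ℤ) ^ (r₁ / 2) *
          chi (f₂s α + ((g₁ y + g₂ y) + (l₁ z + l₂ z)) * (f₁s α + f₂s α) +
            (g₂ y + l₂ z + d₂ w + (g₁ y + g₂ y) * (d₁ w + d₂ w) +
             dotp β y + dotp γ z + dotp δ w)))
        = 2 ^ (r₁ / 2) * (2 ^ (r₄ / 2) *
            chi (d₂s δ + (g₁ y + g₂ y) * (d₁s δ + d₂s δ) +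
              (f₂s α + ((g₁ y + g₂ y) + (l₁ z + l₂ z)) * (f₁s α + f₂s α) +
               g₂ y + l₂ z + dotp β y + dotp γ z))) := by
      intro y z
      rw [← Finset.mul_sum]
      congr 1
      rw [show (∑ w : Fin r₄ → ZMod 2,
          chi (f₂s α + ((g₁ y + g₂ y) + (l₁ z + l₂ z)) * (f₁s α + f₂s α) +
            (g₂ y + l₂ z + d₂ w + (g₁ y + g₂ y) * (d₁ w + d₂ w) +
             dotp β y + dotp γ z + dotp δ w)))
        = ∑ w : Fin r₄ → ZMod 2,
            chi (d₂ w + (g₁ y + g₂ y) * (d₁ w + d₂ w) + dotp δ w +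
              (f₂s α + ((g₁ y + g₂ y) + (l₁ z + l₂ z)) * (f₁s α + f₂s α) +
               g₂ y + l₂ z + dotp β y + dotp γ z)) from
        Finset.sum_congr rfl fun w _ => congrArg chi (by ring)]
      simpa using key' hd₁ hd₂ _ _ δ
    simp only [step2]
    have step3 : ∀ (y : Fin r₂ → ZMod 2),
        (∑ z : Fin r₃ → ZMod 2, (2 : ℤ) ^ (r₁ / 2) * (2 ^ (r₄ / 2) *
          chi (d₂s δ + (g₁ y + g₂ y) * (d₁s δ + d₂s δ) +
            (f₂s α + ((g₁ y + g₂ y) + (l₁ z + l₂ z)) * (f₁s α + f₂s α) +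
             g₂ y + l₂ z + dotp β y + dotp γ z))))
        = 2 ^ (r₁ / 2) * (2 ^ (r₄ / 2) * (2 ^ (r₃ / 2) *
            chi (l₂s γ + (f₁s α + f₂s α) * (l₁s γ + l₂s γ) +
              (d₂s δ + (g₁ y + g₂ y) * (d₁s δ + d₂s δ) + f₂s α +
               (g₁ y + g₂ y) * (f₁s α + f₂s α) + g₂ y + dotp β y)))) := by
      intro y
      rw [← Finset.mul_sum]
      congr 1
      rw [← Finset.mul_sum]
      congr 1
      rw [show (∑ z : Fin r₃ → ZMod 2,
          chi (d₂s δ + (g₁ y + g₂ y) * (d₁s δ + d₂s δ) +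
            (f₂s α + ((g₁ y + g₂ y) + (l₁ z + l₂ z)) * (f₁s α + f₂s α) +
             g₂ y + l₂ z + dotp β y + dotp γ z)))
        = ∑ z : Fin r₃ → ZMod 2,
            chi (l₂ z + (f₁s α + f₂s α) * (l₁ z + l₂ z) + dotp γ z +
              (d₂s δ + (g₁ y + g₂ y) * (d₁s δ + d₂s δ) + f₂s α +
               (g₁ y + g₂ y) * (f₁s α + f₂s α) + g₂ y + dotp β y)) from
        Finset.sum_congr rfl fun z _ => congrArg chi (by ring)]
      simpa using key' hl₁ hl₂ _ _ γ
    simp only [step3]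
    have step4 :
        (∑ y : Fin r₂ → ZMod 2, (2 : ℤ) ^ (r₁ / 2) * (2 ^ (r₄ / 2) * (2 ^ (r₃ / 2) *
          chi (l₂s γ + (f₁s α + f₂s α) * (l₁s γ + l₂s γ) +
            (d₂s δ + (g₁ y + g₂ y) * (d₁s δ + d₂s δ) + f₂s α +
             (g₁ y + g₂ y) * (f₁s α + f₂s α) + g₂ y + dotp β y)))))
        = 2 ^ (r₁ / 2) * (2 ^ (r₄ / 2) * (2 ^ (r₃ / 2) * (2 ^ (r₂ / 2) *
            chi (g₂s β + ((f₁s α + f₂s α) + (d₁s δ + d₂s δ)) * (g₁s β + g₂s β) +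
              (l₂s γ + (f₁s α + f₂s α) * (l₁s γ + l₂s γ) + d₂s δ + f₂s α))))) := by
      rw [← Finset.mul_sum]
      congr 1
      rw [← Finset.mul_sum]
      congr 1
      rw [← Finset.mul_sum]
      congr 1
      rw [show (∑ y : Fin r₂ → ZMod 2,
          chi (l₂s γ + (f₁s α + f₂s α) * (l₁s γ + l₂s γ) +
            (d₂s δ + (g₁ y + g₂ y) * (d₁s δ + d₂s δ) + f₂s α +
             (g₁ y + g₂ y) * (f₁s α + f₂s α) + g₂ y + dotp β y)))
        = ∑ y : Fin r₂ → ZMod 2,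
            chi (g₂ y + ((f₁s α + f₂s α) + (d₁s δ + d₂s δ)) * (g₁ y + g₂ y) + dotp β y +
              (l₂s γ + (f₁s α + f₂s α) * (l₁s γ + l₂s γ) + d₂s δ + f₂s α)) from
        Finset.sum_congr rfl fun y _ => congrArg chi (by ring)]
      simpa using key' hg₁ hg₂ _ _ β
    rw [step4]
    rw [show chi (g₂s β + ((f₁s α + f₂s α) + (d₁s δ + d₂s δ)) * (g₁s β + g₂s β) +
          (l₂s γ + (f₁s α + f₂s α) * (l₁s γ + l₂s γ) + d₂s δ + f₂s α))
        = chi (Fs (Sum.elim α (Sum.elim β (Sum.elim γ δ)))) from by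
      rw [hFs]
      simp only [Sum.elim_inl, Sum.elim_inr]
      exact congrArg chi (by ring)]
    rw [hcard, show ((-1 : ℤ)) ^ ((Fs (Sum.elim α (Sum.elim β (Sum.elim γ δ)))).val)
        = chi (Fs (Sum.elim α (Sum.elim β (Sum.elim γ δ)))) from rfl]
    rw [pow_add, pow_add, pow_add]
    ring
  refine ⟨?_, main⟩
  intro ω
  rw [main ω, abs_mul, abs_pow, abs_two]
  rcases chi_vals (Fs ω) with h | h <;>
    rw [show ((-1 : ℤ)) ^ ((Fs ω).val) = _ from h] <;> simp
end

section
/- Let n be even, let f be an s-plateaued Boolean function on 𝔽₂^k whose Walsh support S_f does not contain the zero vector, with dual f* : S_f → 𝔽₂, and let h₁,…,h_k be Boolean functions on 𝔽₂ⁿ such that for every ω ∈ S_f the function ω·(h₁,…,h_k) is bent on 𝔽₂ⁿ, with dual (ω·(h₁,…,h_k))*. Then 𝔣(x) = f(h₁(x),…,h_k(x)) is a bent function on 𝔽₂ⁿ if and only if for every u ∈ 𝔽₂ⁿ one has ∑_{ω∈S_f} (−1)^{f*(ω) ⊕ (ω·(h₁,…,h_k))*(u)} ∈ {2^{(k−s)/2},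 −2^{(k−s)/2}}. -/
open Finset

lemma zmod2_sign_add (a b : ZMod 2) :
    ((-1:ℤ))^((a+b).val) = (-1)^a.val * (-1)^b.val := by revert a b; decide

lemma dotp_add_right {ι : Type*} [Fintype ι] (w x y : ι → ZMod 2) :
    dotp w (x + y) = dotp w x + dotp w y := by
  simp [dotp, mul_add, Finset.sum_add_distrib]

lemma zmod2_add_eq_zero_iff {ι : Type*} (x y : ι → ZMod 2) : x + y = 0 ↔ x = y := by
  constructor
  · intro hxy; funext i
    have h2 : ∀ a b : ZMod 2, a + b = 0 → a = b := by decide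
    exact h2 _ _ (congrFun hxy i)
  · rintro rfl; funext i
    have h2 : ∀ a : ZMod 2, a + a = 0 := by decide
    exact h2 _

lemma orth {ι : Type*} [Fintype ι] [DecidableEq ι] (z : ι → ZMod 2) :
    ∑ w : ι → ZMod 2, ((-1:ℤ))^((dotp w z).val) =
      if z = 0 then 2^(Fintype.card ι) else 0 := by
  split_ifs with hz
  · subst hz
    have : ∀ w : ι → ZMod 2, dotp w (0 : ι → ZMod 2) = 0 := by
      intro w; simp [dotp]
    simp only [this]
    simp [Fintype.card_fun]
  · obtain ⟨i, hi⟩ := Function.ne_iff.mp hz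
    have hzi : z i = 1 := by
      have h2 : ∀ a : ZMod 2, a ≠ 0 → a = 1 := by decide
      exact h2 _ hi
    set e : ι → ZMod 2 := Pi.single i 1 with he
    have dadd : ∀ a b : ι → ZMod 2, dotp (a + b) z = dotp a z + dotp b z := by
      intro a b; simp [dotp, add_mul, Finset.sum_add_distrib]
    have hez : dotp e z = 1 := by
      simp [dotp, he, Pi.single_apply, ite_mul, hzi]
    have hde : ∀ w : ι → ZMod 2, dotp (w + e) z = dotp w z + 1 := by
      intro w; rw [dadd, hez]
    have hflip : ∀ w : ι → ZMod 2, ((-1:ℤ))^((dotp w z + 1).val) = -((-1:ℤ)^((dotp w z).val)) := by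
      intro w; rw [zmod2_sign_add]
      norm_num [ZMod.val_one]
    have key : ∑ w : ι → ZMod 2, ((-1:ℤ))^((dotp w z).val)
        = - ∑ w : ι → ZMod 2, ((-1:ℤ))^((dotp w z).val) := by
      conv_lhs => rw [← Equiv.sum_comp (Equiv.addRight e)
        (fun w => ((-1:ℤ))^((dotp w z).val))]
      simp only [Equiv.coe_addRight, hde, hflip]
      rw [Finset.sum_neg_distrib]
    linarith [key]

lemma inversion {ι : Type*} [Fintype ι] [DecidableEq ι]
    (f : (ι → ZMod 2) → ZMod 2) (y : ι → ZMod 2) :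
    ∑ w : ι → ZMod 2, WHT f w * (-1:ℤ)^((dotp w y).val)
      = 2^(Fintype.card ι) * (-1:ℤ)^((f y).val) := by
  unfold WHT
  calc ∑ w : ι → ZMod 2, (∑ x : ι → ZMod 2, (-1:ℤ)^((f x + dotp w x).val)) * (-1)^((dotp w y).val)
      = ∑ x : ι → ZMod 2, (-1:ℤ)^((f x).val) * ∑ w : ι → ZMod 2, (-1:ℤ)^((dotp w (x + y)).val) := by
        simp only [Finset.sum_mul, Finset.mul_sum]
        rw [Finset.sum_comm]
        refine Finset.sum_congr rfl fun x _ => Finset.sum_congr rfl fun w _ => ?_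
        rw [dotp_add_right, zmod2_sign_add, zmod2_sign_add]
        ring
    _ = ∑ x : ι → ZMod 2, (-1:ℤ)^((f x).val) * (if x = y then 2^(Fintype.card ι) else 0) := by
        simp only [orth, zmod2_add_eq_zero_iff]
    _ = 2^(Fintype.card ι) * (-1:ℤ)^((f y).val) := by
        simp [Finset.sum_ite_eq', mul_comm]

/-- with `f` an `s`-plateaued function on `𝔽₂^k` whose Walsh support
avoids `0`, dual `f*`, and `ω·(h₁,…,h_k)` bent on `𝔽₂^n` with dual `(ω·(h₁,…,h_k))*`
for every `ω ∈ S_f`, the function `𝔣(x) = f(h₁(x),…,h_k(x))` is bent iff for every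
`u` the sum `∑_{ω∈S_f} (-1)^(f*(ω) ⊕ (ω·(h₁,…,h_k))*(u))` equals `±2^((k-s)/2)`. -/
theorem stmt13 {n k s : ℕ} (hne : Even n) (hsk : s ≤ k) (hpar : Even (k - s))
    (f : (Fin k → ZMod 2) → ZMod 2) (hf : IsPlateaued s f)
    (h0 : WHT f 0 = 0)
    (fdual : (Fin k → ZMod 2) → ZMod 2)
    (hfdual : ∀ w, WHT f w ≠ 0 →
      WHT f w = 2 ^ ((k + s) / 2) * (-1 : ℤ) ^ ((fdual w).val))
    (h : Fin k → (Fin n → ZMod 2) → ZMod 2)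
    (gdual : (Fin k → ZMod 2) → (Fin n → ZMod 2) → ZMod 2)
    (hbent : ∀ w : Fin k → ZMod 2, WHT f w ≠ 0 →
      IsDualBent (fun x => dotp w (fun i => h i x)) (gdual w)) :
    IsBent (fun x : Fin n → ZMod 2 => f (fun i => h i x)) ↔
      ∀ u : Fin n → ZMod 2,
        (∑ w ∈ Finset.univ.filter (fun w : Fin k → ZMod 2 => WHT f w ≠ 0),
          (-1 : ℤ) ^ ((fdual w + gdual w u).val)) = 2 ^ ((k - s) / 2) ∨
        (∑ w ∈ Finset.univ.filter (fun w : Fin k → ZMod 2 => WHT f w ≠ 0),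
          (-1 : ℤ) ^ ((fdual w + gdual w u).val)) = -(2 ^ ((k - s) / 2)) := by
  classical
  set g : (Fin n → ZMod 2) → ZMod 2 := fun x : Fin n → ZMod 2 => f (fun i => h i x) with hg
  set S : Finset (Fin k → ZMod 2) := Finset.univ.filter (fun w : Fin k → ZMod 2 => WHT f w ≠ 0)
    with hSdef
  set T : (Fin n → ZMod 2) → ℤ :=
    fun u => ∑ w ∈ S, (-1 : ℤ) ^ ((fdual w + gdual w u).val) with hT
  have hks : (k + s) / 2 + (k - s) / 2 = k := by
    rcases hpar with ⟨m, hm⟩; omega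
  have key : ∀ u, (2:ℤ) ^ ((k - s) / 2) * WHT g u = 2 ^ (n / 2) * T u := by
    intro u
    have e1 : (2:ℤ) ^ k * WHT g u
        = ∑ w : Fin k → ZMod 2, WHT f w * WHT (fun x => dotp w (fun i => h i x)) u := by
      calc (2:ℤ) ^ k * WHT g u
          = ∑ x : Fin n → ZMod 2,
              ((2:ℤ) ^ k * (-1:ℤ) ^ ((f (fun i => h i x)).val)) * (-1:ℤ) ^ ((dotp u x).val) := by
            unfold WHT
            rw [Finset.mul_sum]
            refine Finset.sum_congr rfl fun x _ => ?_
            rw [show g x = f (fun i => h i x) from rfl, zmod2_sign_add]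
            ring
        _ = ∑ x : Fin n → ZMod 2,
              (∑ w : Fin k → ZMod 2, WHT f w * (-1:ℤ) ^ ((dotp w (fun i => h i x)).val))
                * (-1:ℤ) ^ ((dotp u x).val) := by
            refine Finset.sum_congr rfl fun x _ => ?_
            rw [show ((2:ℤ) ^ k : ℤ) = 2 ^ (Fintype.card (Fin k)) by simp,
              ← inversion f (fun i => h i x)]
        _ = ∑ w : Fin k → ZMod 2, WHT f w * WHT (fun x => dotp w (fun i => h i x)) u := by
            simp only [Finset.sum_mul]
            rw [Finset.sum_comm]
            refine Finset.sum_congr rfl fun w _ => ?_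
            unfold WHT
            rw [Finset.mul_sum]
            refine Finset.sum_congr rfl fun x _ => ?_
            rw [zmod2_sign_add]
            ring
    have e2 : ∑ w : Fin k → ZMod 2, WHT f w * WHT (fun x => dotp w (fun i => h i x)) u
        = ∑ w ∈ S, WHT f w * WHT (fun x => dotp w (fun i => h i x)) u := by
      rw [hSdef]
      refine (Finset.sum_filter_of_ne ?_).symm
      intro w _ hw hc
      rw [hc, zero_mul] at hw
      exact hw rfl
    have e3 : ∑ w ∈ S, WHT f w * WHT (fun x => dotp w (fun i => h i x)) u
        = 2 ^ ((k + s) / 2) * 2 ^ (n / 2) * T u := by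
      rw [hT, Finset.mul_sum]
      refine Finset.sum_congr rfl fun w hw => ?_
      have hw' : WHT f w ≠ 0 := by
        rw [hSdef] at hw
        simpa using (Finset.mem_filter.mp hw).2
      rw [hfdual w hw', hbent w hw' u, zmod2_sign_add]
      simp only [Fintype.card_fin]
      ring
    have hcancel : (2:ℤ) ^ ((k + s) / 2) * ((2:ℤ) ^ ((k - s) / 2) * WHT g u)
        = (2:ℤ) ^ ((k + s) / 2) * ((2:ℤ) ^ (n / 2) * T u) := by
      rw [← mul_assoc, ← pow_add, hks, e1, e2, e3]
      ring
    exact mul_left_cancel₀ (by positivity) hcancel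
  have hpos : (0:ℤ) < 2 ^ ((k - s) / 2) := by positivity
  have hnpos : (0:ℤ) < 2 ^ (n / 2) := by positivity
  have habs : ∀ u, (2:ℤ) ^ ((k - s) / 2) * |WHT g u| = 2 ^ (n / 2) * |T u| := by
    intro u
    simpa [abs_mul, abs_pow] using congrArg abs (key u)
  constructor
  · intro hb u
    have h1 : |WHT g u| = 2 ^ (n / 2) := by simpa using hb u
    have h3 := habs u
    rw [h1] at h3
    have h2 : |T u| = 2 ^ ((k - s) / 2) :=
      mul_left_cancel₀ hnpos.ne' (by linear_combination -h3)
    exact (abs_eq hpos.le).mp h2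
  · intro hs ω
    have h2 : |T ω| = 2 ^ ((k - s) / 2) := (abs_eq hpos.le).mpr (hs ω)
    have h3 := habs ω
    rw [h2] at h3
    have h4 : |WHT g ω| = 2 ^ (n / 2) :=
      mul_left_cancel₀ hpos.ne' (by linear_combination h3)
    simpa using h4
end
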